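/- Let μ be the uniform probability measure on {-1,1}^n. There exists a universal constant κ > 0 (independent of n and V) such that for every countable subset V ⊂ ℝ^n, log ∫ exp( sup_{ξ ∈ V} ( ⟨ξ,x⟩ - Λ_μ(ξ) ) ) dμ(x) ≤ κ · b(V), where Λ_μ(ξ) = log ∫ e^{⟨ξ,x⟩} dμ(x) and b(V) = E[ sup_{ξ ∈ V} ⟨ξ,ε⟩ ] with ε uniformly distributed on {-1,1}^n. -/

import Mathlib

open MeasureTheory Real Set ENNReal
open scoped Classical

/-- The uniform probability measure on the discrete hypercube `{-1,1}ⁿ`,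
viewed as a measure on `ℝⁿ`. -/
noncomputable def cubeUniform (n : ℕ) : Measure (Fin n → ℝ) :=
  Measure.pi fun _ =>
    ((2 : ℝ≥0∞)⁻¹ • Measure.dirac (-1 : ℝ) + (2 : ℝ≥0∞)⁻¹ • Measure.dirac (1 : ℝ))

/-- The logarithmic Laplace transform `Λ_μ(ξ) = log ∫ e^{⟨ξ,x⟩} dμ(x)` of the uniform
measure on `{-1,1}ⁿ`. -/
noncomputable def logLaplaceCube (n : ℕ) (ξ : Fin n → ℝ) : ℝ :=
  Real.log (∫ x, Real.exp (∑ i, ξ i * x i) ∂cubeUniform n)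

open scoped BigOperators

/-! The constant is `κ = 2`. Since `Λ_μ(ξ) = ∑ᵢ log cosh ξᵢ`, the functions
`F_K(ξ, y, ε) = ∑_{i ∈ K} (ξᵢ yᵢ - log cosh ξᵢ) + ∑_{i ∉ K} 2 ξᵢ εᵢ`, `K ⊆ {1,…,n}`, interpolate
between `⟨ξ, y⟩ - Λ_μ(ξ)` and `2 ⟨ξ, ε⟩`. With independent uniform signs `y, ε` let
`Φ(K) = log 𝔼_y exp 𝔼_ε sup_{ξ ∈ V} F_K`. Then `Φ(univ)` is the left-hand side and
`Φ(∅) = 2 b(V)`, and moving a coordinate `j` into `K` does not increase `Φ`. For fixed `y, ε`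
this is the two-point inequality
`e^{u₁+t₁-log cosh t₁} + e^{u₂-t₂-log cosh t₂} ≤ 2 e^{(max(u₁+2t₁,u₂+2t₂) + max(u₁-2t₁,u₂-2t₂))/2}`
(for `yⱼ = ±1` on the left, `εⱼ = ±1` on the right), which passes to suprema over `ξ`; Hölder's
inequality in the form `e^{𝔼a} + e^{𝔼b} ≤ e^{𝔼 log(e^a + e^b)}` carries it through `𝔼_ε`, and
averaging over `yⱼ` finishes. -/

lemma sq_mul_div_add_le_of_le {a a' M M' : ℝ} (ha : 0 < a) (ha' : 0 < a') (hM : a ≤ M)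
    (hM' : a' ≤ M') : a ^ 2 * a' / (a + a') ≤ M ^ 2 * M' / (M + M') := by
  rw [div_le_div_iff₀ (by positivity) (by linarith)]
  have h1 : 0 ≤ M - a := by linarith
  have h2 : 0 ≤ M' - a' := by linarith
  nlinarith [mul_nonneg (mul_nonneg h1 h2) ha.le, mul_nonneg (mul_nonneg h1 ha.le) ha'.le,
    mul_nonneg (mul_nonneg h2 ha.le) ha.le, mul_nonneg (mul_nonneg h1 h1) ha'.le,
    mul_nonneg (mul_nonneg h1 h1) h2, mul_nonneg (mul_nonneg h1 h2) ha'.le]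

lemma sq_mul_div_add_add_le_max_mul_max {a a' b b' : ℝ} (ha : 0 < a) (ha' : 0 < a')
    (hb : 0 < b) (hb' : 0 < b') :
    a ^ 2 * a' / (a + a') + b' ^ 2 * b / (b' + b) ≤ max a b * max a' b' := by
  have hM : 0 < max a b := lt_max_of_lt_left ha
  have hM' : 0 < max a' b' := lt_max_of_lt_left ha'
  calc a ^ 2 * a' / (a + a') + b' ^ 2 * b / (b' + b)
      ≤ max a b ^ 2 * max a' b' / (max a b + max a' b')
        + max a' b' ^ 2 * max a b / (max a' b' + max a b) := by
        gcongr ?_ + ?_ <;> apply sq_mul_div_add_le_of_le <;> simp [*]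
    _ = max a b * max a' b' := by
        rw [add_comm (max a' b')]
        field_simp

/-- In the variables `a = e^{(u+2t)/2}`, `a' = e^{(u-2t)/2}` the two-point inequality becomes
`sq_mul_div_add_add_le_max_mul_max`. -/
lemma exp_add_sub_log_cosh (u t : ℝ) :
    exp (u + t - log (cosh t)) =
      2 * (exp ((u + 2 * t) / 2) ^ 2 * exp ((u - 2 * t) / 2) /
        (exp ((u + 2 * t) / 2) + exp ((u - 2 * t) / 2))) := by
  have hplus : exp ((u + 2 * t) / 2) = exp (u / 2) * exp t := by rw [← Real.exp_add]; ring_nf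
  have hminus : exp ((u - 2 * t) / 2) = exp (u / 2) * (exp t)⁻¹ := by
    rw [← Real.exp_neg, ← Real.exp_add]; ring_nf
  have hu : exp u = exp (u / 2) ^ 2 := by rw [← Real.exp_nat_mul]; ring_nf
  rw [Real.exp_sub, Real.exp_add, Real.exp_log (cosh_pos t), cosh_eq, Real.exp_neg, hplus,
    hminus, hu]
  have := Real.exp_pos t
  have := Real.exp_pos (u / 2)
  field_simp

lemma exp_add_sub_log_cosh_add_exp_sub_sub_log_cosh_le (u₁ u₂ t₁ t₂ : ℝ) :
    exp (u₁ + t₁ - log (cosh t₁)) + exp (u₂ - t₂ - log (cosh t₂)) ≤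
      2 * exp ((max (u₁ + 2 * t₁) (u₂ + 2 * t₂) + max (u₁ - 2 * t₁) (u₂ - 2 * t₂)) / 2) := by
  have h₂ := exp_add_sub_log_cosh u₂ (-t₂)
  rw [cosh_neg, ← sub_eq_add_neg, mul_neg, ← sub_eq_add_neg, sub_neg_eq_add] at h₂
  have hmax : exp ((max (u₁ + 2 * t₁) (u₂ + 2 * t₂) + max (u₁ - 2 * t₁) (u₂ - 2 * t₂)) / 2) =
      max (exp ((u₁ + 2 * t₁) / 2)) (exp ((u₂ + 2 * t₂) / 2)) *
        max (exp ((u₁ - 2 * t₁) / 2)) (exp ((u₂ - 2 * t₂) / 2)) := by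
    rw [add_div, Real.exp_add, ← max_div_div_right zero_le_two, ← max_div_div_right zero_le_two,
      Real.exp_monotone.map_max, Real.exp_monotone.map_max]
  rw [exp_add_sub_log_cosh, h₂, hmax, ← mul_add]
  gcongr
  exact sq_mul_div_add_add_le_max_mul_max (Real.exp_pos _) (Real.exp_pos _) (Real.exp_pos _)
    (Real.exp_pos _)

lemma add_sub_log_cosh_le_max (c t : ℝ) : c + t - log (cosh t) ≤ max (c + 2 * t) (c - 2 * t) := by
  have := Real.log_nonneg (one_le_cosh t)
  rcases le_total 0 t with ht | ht
  · exact le_max_of_le_left (by linarith)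
  · exact le_max_of_le_right (by linarith)

lemma sub_sub_log_cosh_le_max (c t : ℝ) : c - t - log (cosh t) ≤ max (c + 2 * t) (c - 2 * t) := by
  simpa [cosh_neg, max_comm, ← sub_eq_add_neg] using add_sub_log_cosh_le_max c (-t)

lemma exp_iSup_add_exp_iSup_le {ι : Type*} [Nonempty ι] (C t : ι → ℝ)
    (hplus : BddAbove (Set.range fun i => C i + 2 * t i))
    (hminus : BddAbove (Set.range fun i => C i - 2 * t i)) :
    exp (⨆ i, C i + t i - log (cosh (t i))) + exp (⨆ i, C i - t i - log (cosh (t i))) ≤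
      2 * exp (((⨆ i, C i + 2 * t i) + ⨆ i, C i - 2 * t i) / 2) := by
  set X := 2 * exp (((⨆ i, C i + 2 * t i) + ⨆ i, C i - 2 * t i) / 2) with hX
  have hmax : ∀ i, max (C i + 2 * t i) (C i - 2 * t i) ≤
      max (⨆ i, C i + 2 * t i) (⨆ i, C i - 2 * t i) :=
    fun i => max_le_max (le_ciSup hplus i) (le_ciSup hminus i)
  have hbdd₁ : BddAbove (Set.range fun i => C i + t i - log (cosh (t i))) :=
    ⟨_, Set.forall_mem_range.2 fun i => (add_sub_log_cosh_le_max _ _).trans (hmax i)⟩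
  have hbdd₂ : BddAbove (Set.range fun i => C i - t i - log (cosh (t i))) :=
    ⟨_, Set.forall_mem_range.2 fun i => (sub_sub_log_cosh_le_max _ _).trans (hmax i)⟩
  have pair : ∀ i k, exp (C i + t i - log (cosh (t i))) + exp (C k - t k - log (cosh (t k))) ≤ X :=
    fun i k => (exp_add_sub_log_cosh_add_exp_sub_sub_log_cosh_le _ _ _ _).trans <| by
      rw [hX]
      gcongr
      exacts [max_le (le_ciSup hplus i) (le_ciSup hplus k),
        max_le (le_ciSup hminus i) (le_ciSup hminus k)]
  rw [Real.exp_monotone.map_ciSup_of_continuousAt Real.continuous_exp.continuousAt hbdd₁,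
    Real.exp_monotone.map_ciSup_of_continuousAt Real.continuous_exp.continuousAt hbdd₂]
  suffices ∀ k,
      (⨆ i, exp (C i + t i - log (cosh (t i)))) + exp (C k - t k - log (cosh (t k))) ≤ X by
    have := ciSup_le fun k => le_sub_iff_add_le'.mpr (this k)
    linarith
  intro k
  have := ciSup_le fun i => le_sub_iff_add_le.mpr (pair i k)
  linarith

lemma exp_expect_le_expect_exp {ι : Type*} [Fintype ι] [Nonempty ι] (a : ι → ℝ) :
    exp (𝔼 i, a i) ≤ 𝔼 i, exp (a i) := by
  have hN : (0 : ℝ) < Fintype.card ι := by exact_mod_cast Fintype.card_pos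
  simp only [Fintype.expect_eq_sum_div_card, div_eq_inv_mul, Finset.mul_sum]
  exact convexOn_exp.map_sum_le (fun _ _ => by positivity) (by simp [hN.ne'])
    (fun _ _ => Set.mem_univ _)

lemma exp_expect_add_exp_expect_le {ι : Type*} [Fintype ι] [Nonempty ι] (a b : ι → ℝ) :
    exp (𝔼 i, a i) + exp (𝔼 i, b i) ≤ exp (𝔼 i, log (exp (a i) + exp (b i))) := by
  set L : ι → ℝ := fun i => log (exp (a i) + exp (b i))
  have hL : ∀ i, exp (a i - L i) + exp (b i - L i) = 1 := fun i => by
    rw [Real.exp_sub, Real.exp_sub, Real.exp_log (by positivity), ← add_div,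
      div_self (by positivity)]
  have hsplit : ∀ c : ι → ℝ, exp (𝔼 i, c i) = exp (𝔼 i, (c i - L i)) * exp (𝔼 i, L i) :=
    fun c => by rw [← exp_add, Finset.expect_sub_distrib, sub_add_cancel]
  calc exp (𝔼 i, a i) + exp (𝔼 i, b i)
      ≤ (𝔼 i, exp (a i - L i) + 𝔼 i, exp (b i - L i)) * exp (𝔼 i, L i) := by
        rw [hsplit a, hsplit b, add_mul]
        gcongr <;> exact exp_expect_le_expect_exp _
    _ = exp (𝔼 i, L i) := by
        rw [← Finset.expect_add_distrib, Finset.expect_congr rfl (fun i _ => hL i),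
          Fintype.expect_const, one_mul]

lemma exp_expect_add_exp_expect_le_two_mul_exp_expect {ι : Type*} [Fintype ι] [Nonempty ι]
    {a b c : ι → ℝ} (h : ∀ i, exp (a i) + exp (b i) ≤ 2 * exp (c i)) :
    exp (𝔼 i, a i) + exp (𝔼 i, b i) ≤ 2 * exp (𝔼 i, c i) := by
  have hlog : ∀ i, log (exp (a i) + exp (b i)) ≤ Real.log 2 + c i := fun i => by
    rw [← Real.log_exp (c i), ← Real.log_mul two_ne_zero (Real.exp_ne_zero _)]
    exact Real.log_le_log (by positivity) (h i)
  calc exp (𝔼 i, a i) + exp (𝔼 i, b i) ≤ exp (𝔼 i, log (exp (a i) + exp (b i))) :=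
        exp_expect_add_exp_expect_le a b
    _ ≤ exp (𝔼 i, (Real.log 2 + c i)) := by gcongr with i; exact hlog i
    _ = 2 * exp (𝔼 i, c i) := by
        rw [Finset.expect_add_distrib, Fintype.expect_const, Real.exp_add, Real.exp_log two_pos]

def boolSign (b : Bool) : ℝ := if b then 1 else -1

@[simp] lemma boolSign_true : boolSign true = 1 := rfl

@[simp] lemma boolSign_false : boolSign false = -1 := rfl

lemma boolSign_injective : Function.Injective boolSign := by
  intro a b
  cases a <;> cases b <;> norm_num [boolSign]

noncomputable def boolUniform : Measure Bool :=
  (2 : ℝ≥0∞)⁻¹ • Measure.dirac false + (2 : ℝ≥0∞)⁻¹ • Measure.dirac true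

instance : IsProbabilityMeasure boolUniform :=
  ⟨by simp [boolUniform, ENNReal.inv_two_add_inv_two]⟩

@[simp] lemma boolUniform_singleton (b : Bool) : boolUniform {b} = 2⁻¹ := by
  cases b <;> simp [boolUniform]

lemma cubeUniform_eq_map (n : ℕ) :
    cubeUniform n = (Measure.pi fun _ : Fin n => boolUniform).map
      (fun s i => boolSign (s i)) := by
  rw [Measure.pi_map_pi (fun _ => Measurable.of_discrete.aemeasurable)]
  simp [cubeUniform, boolUniform, Measure.map_add, Measure.map_smul, Measurable.of_discrete,
    boolSign, add_comm]

lemma integral_cubeUniform {n : ℕ} (f : (Fin n → ℝ) → ℝ) :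
    ∫ x, f x ∂cubeUniform n = 𝔼 s : Fin n → Bool, f (fun i => boolSign (s i)) := by
  have hemb : MeasurableEmbedding fun (s : Fin n → Bool) i => boolSign (s i) :=
    { injective := fun s t h => funext fun i => boolSign_injective (congrFun h i)
      measurable := Measurable.of_discrete
      measurableSet_image' := fun s _ => (Set.toFinite _).measurableSet }
  rw [cubeUniform_eq_map, hemb.integral_map, integral_fintype (hf := .of_finite),
    Fintype.expect_eq_sum_div_card, Finset.sum_div]
  refine Finset.sum_congr rfl fun s _ => ?_
  simp [Measure.real, div_eq_inv_mul]

instance : IsProbabilityMeasure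
    ((2 : ℝ≥0∞)⁻¹ • Measure.dirac (-1 : ℝ) + (2 : ℝ≥0∞)⁻¹ • Measure.dirac (1 : ℝ)) :=
  ⟨by simp [ENNReal.inv_two_add_inv_two]⟩

lemma integral_exp_mul_rademacher (t : ℝ) :
    ∫ x, exp (t * x) ∂((2 : ℝ≥0∞)⁻¹ • Measure.dirac (-1 : ℝ) + (2 : ℝ≥0∞)⁻¹ • Measure.dirac 1) =
      cosh t := by
  rw [integral_add_measure ((integrable_dirac (by simp)).smul_measure (by simp))
      ((integrable_dirac (by simp)).smul_measure (by simp)),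
    integral_smul_measure, integral_smul_measure, integral_dirac, integral_dirac, cosh_eq]
  simp only [mul_neg, mul_one, ENNReal.toReal_inv, ENNReal.toReal_ofNat, smul_eq_mul]
  ring

lemma logLaplaceCube_eq_sum_log_cosh (n : ℕ) (ξ : Fin n → ℝ) :
    logLaplaceCube n ξ = ∑ i, log (cosh (ξ i)) := by
  rw [logLaplaceCube, ← Real.log_prod fun i _ => (cosh_pos (ξ i)).ne']
  simp_rw [Real.exp_sum]
  rw [cubeUniform, integral_fintype_prod_eq_prod (fun i x => exp (ξ i * x))]
  simp_rw [integral_exp_mul_rademacher]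

section Interpolation

variable {ι : Type*} [DecidableEq ι]

lemma expect_update_true_add_update_false [Fintype ι] (j : ι) (f : (ι → Bool) → ℝ) :
    𝔼 y, (f (Function.update y j true) + f (Function.update y j false)) = 2 * 𝔼 y, f y := by
  have hinv : Function.Involutive fun y : ι → Bool => Function.update y j (!y j) := fun y => by
    simp only [Function.update_self, Bool.not_not, Function.update_idem, Function.update_eq_self]
  have hflip : 𝔼 y, f (Function.update y j (!y j)) = 𝔼 y, f y :=
    Fintype.expect_equiv (hinv.toPerm _) _ _ fun _ => rfl
  rw [two_mul]
  nth_rw 2 [← hflip]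
  rw [← Finset.expect_add_distrib]
  refine Finset.expect_congr rfl fun y _ => ?_
  cases hy : y j
  · rw [Bool.not_false, ← hy, Function.update_eq_self, add_comm]
  · rw [Bool.not_true, ← hy, Function.update_eq_self]

noncomputable def interpolantTerm (K : Finset ι) (ξ : ι → ℝ) (y ε : ι → Bool) (i : ι) : ℝ :=
  if i ∈ K then ξ i * boolSign (y i) - log (cosh (ξ i)) else 2 * ξ i * boolSign (ε i)

lemma interpolantTerm_insert_update (K : Finset ι) (j : ι) (ξ : ι → ℝ)
    (y ε : ι → Bool) (b : Bool) :
    interpolantTerm (insert j K) ξ (Function.update y j b) ε =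
      Function.update (interpolantTerm K ξ y ε) j (ξ j * boolSign b - log (cosh (ξ j))) := by
  ext i
  rcases eq_or_ne i j with rfl | hij
  · simp [interpolantTerm]
  · simp [interpolantTerm, hij]

lemma interpolantTerm_update {K : Finset ι} {j : ι} (hj : j ∉ K) (ξ : ι → ℝ)
    (y ε : ι → Bool) (b : Bool) :
    interpolantTerm K ξ y (Function.update ε j b) =
      Function.update (interpolantTerm K ξ y ε) j (2 * ξ j * boolSign b) := by
  ext i
  rcases eq_or_ne i j with rfl | hij
  · simp [interpolantTerm, hj]
  · simp [interpolantTerm, hij]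

variable [Fintype ι]

noncomputable def interpolant (K : Finset ι) (ξ : ι → ℝ) (y ε : ι → Bool) : ℝ :=
  ∑ i, interpolantTerm K ξ y ε i

noncomputable def supInterpolant (V : Set (ι → ℝ)) (K : Finset ι) (y ε : ι → Bool) : ℝ :=
  ⨆ ξ : V, interpolant K ξ y ε

noncomputable def interpolationFunctional (V : Set (ι → ℝ)) (K : Finset ι) : ℝ :=
  log (𝔼 y, exp (𝔼 ε, supInterpolant V K y ε))

variable {V : Set (ι → ℝ)}

lemma bddAbove_range_interpolant (hV : ∀ x : ι → ℝ, BddAbove ((fun ξ => ∑ i, ξ i * x i) '' V))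
    (K : Finset ι) (y ε : ι → Bool) : BddAbove (Set.range fun ξ : V => interpolant K ξ y ε) := by
  obtain ⟨M, hM⟩ := hV fun i => if i ∈ K then boolSign (y i) else 2 * boolSign (ε i)
  refine ⟨M, Set.forall_mem_range.2 fun ξ => le_trans ?_ (hM ⟨ξ, ξ.2, rfl⟩)⟩
  refine Finset.sum_le_sum fun i _ => ?_
  unfold interpolantTerm
  split_ifs
  · linarith [Real.log_nonneg (one_le_cosh (ξ.1 i))]
  · exact (mul_assoc _ _ _).trans_le (mul_left_comm _ _ _).le

lemma exp_supInterpolant_insert_update_le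
    (hV : ∀ x : ι → ℝ, BddAbove ((fun ξ => ∑ i, ξ i * x i) '' V)) [Nonempty V]
    {K : Finset ι} {j : ι} (hj : j ∉ K) (y ε : ι → Bool) :
    exp (supInterpolant V (insert j K) (Function.update y j true) ε) +
        exp (supInterpolant V (insert j K) (Function.update y j false) ε) ≤
      2 * exp ((supInterpolant V K y (Function.update ε j true) +
        supInterpolant V K y (Function.update ε j false)) / 2) := by
  set C : V → ℝ := fun ξ => ∑ i ∈ Finset.univ \ {j}, interpolantTerm K ξ y ε i
  have hy : ∀ b, (fun ξ : V => interpolant (insert j K) ξ (Function.update y j b) ε) =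
      fun ξ => C ξ + ξ.1 j * boolSign b - log (cosh (ξ.1 j)) := fun b => funext fun ξ => by
    rw [interpolant, interpolantTerm_insert_update, Finset.sum_update_of_mem (Finset.mem_univ j)]
    ring
  have hε : ∀ b, (fun ξ : V => interpolant K ξ y (Function.update ε j b)) =
      fun ξ => C ξ + 2 * ξ.1 j * boolSign b := fun b => funext fun ξ => by
    rw [interpolant, interpolantTerm_update hj, Finset.sum_update_of_mem (Finset.mem_univ j)]
    ring
  have hbdd := bddAbove_range_interpolant hV K y
  have key := exp_iSup_add_exp_iSup_le C (fun ξ => ξ.1 j)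
    (by simpa [hε] using hbdd (Function.update ε j true))
    (by simpa [hε, sub_eq_add_neg] using hbdd (Function.update ε j false))
  simpa only [supInterpolant, hy, hε, boolSign_true, boolSign_false, mul_one, mul_neg_one,
    ← sub_eq_add_neg] using key

lemma exp_expect_supInterpolant_insert_update_le
    (hV : ∀ x : ι → ℝ, BddAbove ((fun ξ => ∑ i, ξ i * x i) '' V)) [Nonempty V]
    {K : Finset ι} {j : ι} (hj : j ∉ K) (y : ι → Bool) :
    exp (𝔼 ε, supInterpolant V (insert j K) (Function.update y j true) ε) +
        exp (𝔼 ε, supInterpolant V (insert j K) (Function.update y j false) ε) ≤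
      2 * exp (𝔼 ε, supInterpolant V K y ε) := by
  have := exp_expect_add_exp_expect_le_two_mul_exp_expect
    (exp_supInterpolant_insert_update_le hV hj y)
  rwa [← Finset.expect_div, expect_update_true_add_update_false,
    mul_div_cancel_left₀ _ two_ne_zero] at this

lemma interpolationFunctional_insert_le
    (hV : ∀ x : ι → ℝ, BddAbove ((fun ξ => ∑ i, ξ i * x i) '' V)) [Nonempty V]
    {K : Finset ι} {j : ι} (hj : j ∉ K) :
    interpolationFunctional V (insert j K) ≤ interpolationFunctional V K := by
  refine Real.log_le_log (Finset.expect_pos (fun _ _ => Real.exp_pos _) Finset.univ_nonempty) ?_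
  have := Finset.expect_le_expect fun y (_ : y ∈ Finset.univ) =>
    exp_expect_supInterpolant_insert_update_le hV hj y
  rw [expect_update_true_add_update_false j (fun y => exp (𝔼 ε, supInterpolant V (insert j K) y ε)),
    ← Finset.mul_expect] at this
  linarith

lemma interpolationFunctional_le_empty
    (hV : ∀ x : ι → ℝ, BddAbove ((fun ξ => ∑ i, ξ i * x i) '' V)) [Nonempty V] (K : Finset ι) :
    interpolationFunctional V K ≤ interpolationFunctional V ∅ := by
  induction K using Finset.induction_on with
  | empty => exact le_rfl
  | insert j K hj ih => exact (interpolationFunctional_insert_le hV hj).trans ih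

end Interpolation

lemma interpolationFunctional_univ {n : ℕ} (V : Set (Fin n → ℝ)) :
    interpolationFunctional V Finset.univ =
      log (∫ x, exp (⨆ ξ : V, (∑ i, (ξ : Fin n → ℝ) i * x i - logLaplaceCube n ξ))
        ∂cubeUniform n) := by
  simp [interpolationFunctional, supInterpolant, interpolant, interpolantTerm,
    integral_cubeUniform, logLaplaceCube_eq_sum_log_cosh, Finset.sum_sub_distrib]

lemma interpolationFunctional_empty {n : ℕ} (V : Set (Fin n → ℝ)) :
    interpolationFunctional V ∅ =
      2 * ∫ x, (⨆ ξ : V, ∑ i, (ξ : Fin n → ℝ) i * x i) ∂cubeUniform n := by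
  simp [interpolationFunctional, supInterpolant, interpolant, interpolantTerm,
    integral_cubeUniform, Real.mul_iSup_of_nonneg, Finset.mul_sum, Finset.mul_expect, mul_assoc]

/-- **Strong integrability of Bernoulli processes.** There is a universal constant `κ > 0`
such that for every countable `V ⊆ ℝⁿ`,
`log ∫ exp (sup_{ξ ∈ V} (⟨ξ,x⟩ - Λ_μ(ξ))) dμ(x) ≤ κ b(V)`, where
`b(V) = E[sup_{ξ ∈ V} ⟨ξ,ε⟩]` with `ε` uniform on `{-1,1}ⁿ`. -/
theorem strong_integrability_bernoulli :
    ∃ κ : ℝ, 0 < κ ∧ ∀ (n : ℕ) (V : Set (Fin n → ℝ)), V.Countable → V.Nonempty →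
      (∀ x : Fin n → ℝ, BddAbove ((fun ξ => ∑ i, ξ i * x i) '' V)) →
      Real.log (∫ x, Real.exp (⨆ ξ : V, (∑ i, (ξ : Fin n → ℝ) i * x i - logLaplaceCube n ξ))
          ∂cubeUniform n) ≤
        κ * ∫ x, (⨆ ξ : V, ∑ i, (ξ : Fin n → ℝ) i * x i) ∂cubeUniform n := by
  refine ⟨2, two_pos, fun n V _ hne hV => ?_⟩
  have := hne.to_subtype
  rw [← interpolationFunctional_univ, ← interpolationFunctional_empty]
  exact interpolationFunctional_le_empty hV _
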